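/- Skorokhod-type obstacle problem, existence via the running maximum: define η_t := max_{0≤v≤t} L_v for t ∈ {0,...,N-1}, and define Y_t := E_t[Σ_{u=t}^{N-1} η_u + X_N] for t ∈ {0,...,N-1} and Y_N := X_N. Then η is adapted, square-integrable and nondecreasing, Y is adapted and square-integrable, Y_t ≥ X_t a.s. for every t ∈ {0,...,N}, and a.s. Y_t = X_t holds at every point of increase of η, i.e., a.s., for every t ∈ {0,...,N-1} with η_t > η_{t-1} (with the convention η_{-1} = -∞, so t = 0 is always a point of increase) one has Y_t = X_t, and Y_N = X_N. -/

import Mathlib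

open MeasureTheory Filter

/-- Running maximum `max_{t ≤ v ≤ u} L v ω` (intended for `t ≤ u`). -/
noncomputable def runMax {Ω : Type*} (L : ℕ → Ω → ℝ) (t u : ℕ) (ω : Ω) : ℝ :=
  (Finset.Icc t u).fold max (L t ω) fun v => L v ω

/-- Running minimum `min_{t ≤ v ≤ u} K v ω` (intended for `t ≤ u`). -/
noncomputable def runMin {Ω : Type*} (K : ℕ → Ω → ℝ) (t u : ℕ) (ω : Ω) : ℝ :=
  (Finset.Icc t u).fold min (K t ω) fun v => K v ω

/-- A discrete-time nonlinear expectation on the horizon `{0, ..., N}`: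
a family of maps `E t` sending square-integrable `F N`-measurable random
variables to square-integrable `F t`-measurable random variables, satisfying
monotonicity, strict monotonicity, translation invariance, the tower property,
the zero-one law and monotone convergence. -/
structure NLExp {Ω : Type*} {m0 : MeasurableSpace Ω} (μ : Measure Ω)
    (F : Filtration ℕ m0) (N : ℕ) where
  E : ℕ → (Ω → ℝ) → Ω → ℝ
  adapted : ∀ t, t ≤ N → ∀ ξ : Ω → ℝ, StronglyMeasurable[F N] ξ → MemLp ξ 2 μ →
    StronglyMeasurable[F t] (E t ξ)
  sqInt : ∀ t, t ≤ N → ∀ ξ : Ω → ℝ, StronglyMeasurable[F N] ξ → MemLp ξ 2 μ →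
    MemLp (E t ξ) 2 μ
  mono : ∀ t, t ≤ N → ∀ ξ η : Ω → ℝ, StronglyMeasurable[F N] ξ → MemLp ξ 2 μ →
    StronglyMeasurable[F N] η → MemLp η 2 μ → ξ ≤ᵐ[μ] η → E t ξ ≤ᵐ[μ] E t η
  strictMono : ∀ t, t ≤ N → ∀ ξ η : Ω → ℝ, StronglyMeasurable[F N] ξ → MemLp ξ 2 μ →
    StronglyMeasurable[F N] η → MemLp η 2 μ → ξ ≤ᵐ[μ] η →
    0 < μ {ω | ξ ω < η ω} → 0 < μ {ω | E t ξ ω < E t η ω}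
  translation : ∀ t, t ≤ N → ∀ ξ ζ : Ω → ℝ, StronglyMeasurable[F N] ξ → MemLp ξ 2 μ →
    StronglyMeasurable[F t] ζ → MemLp ζ 2 μ → E t (ξ + ζ) =ᵐ[μ] E t ξ + ζ
  tower : ∀ s t, s ≤ t → t ≤ N → ∀ ξ : Ω → ℝ, StronglyMeasurable[F N] ξ → MemLp ξ 2 μ →
    E s (E t ξ) =ᵐ[μ] E s ξ
  zeroOne : ∀ t, t ≤ N → ∀ ξ η : Ω → ℝ, StronglyMeasurable[F N] ξ → MemLp ξ 2 μ →
    StronglyMeasurable[F N] η → MemLp η 2 μ → ∀ A : Set Ω, MeasurableSet[F t] A →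
    E t (A.indicator ξ + Aᶜ.indicator η) =ᵐ[μ]
      A.indicator (E t ξ) + Aᶜ.indicator (E t η)
  monoConv : ∀ t, t ≤ N → ∀ (ξs : ℕ → Ω → ℝ) (ξ : Ω → ℝ),
    (∀ n, StronglyMeasurable[F N] (ξs n)) → (∀ n, MemLp (ξs n) 2 μ) →
    StronglyMeasurable[F N] ξ → MemLp ξ 2 μ →
    (∀ᵐ ω ∂μ, (Monotone fun n => ξs n ω) ∨ (Antitone fun n => ξs n ω)) →
    (∀ᵐ ω ∂μ, Tendsto (fun n => ξs n ω) atTop (nhds (ξ ω))) →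
    ∀ᵐ ω ∂μ, Tendsto (fun n => E t (ξs n) ω) atTop (nhds (E t ξ ω))

/-! The running maximum `η_u = max_{0 ≤ v ≤ u} L_v` dominates the running maximum
`max_{t ≤ v ≤ u} L_v` started at `t`, so by monotonicity
`Y_t ≥ E_t[∑_u max_{t ≤ v ≤ u} L_v + X_N] = X_t`. At a point of increase of `η` the new value
`L_t` exceeds all earlier ones, so the two running maxima coincide for all `u ≥ t` on the
`F_t`-measurable event of increase; the zero-one law makes `E_t` local on `F_t`-events, whence
`Y_t = X_t` there. Square integrability of each `L_t` is recovered from that of the sums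
`∑_{u ≥ t} max_{t ≤ v ≤ u} L_v` by downward induction on `t`: the sum is
`L_t + ∑_{u > t} max(L_t, max_{t < v ≤ u} L_v)`, which moves at least as fast as `L_t`. -/

open scoped ENNReal

lemma abs_le_abs_add_sum_max {ι : Type*} (s : Finset ι) (x : ℝ) (m : ι → ℝ) :
    |x| ≤ |x + ∑ i ∈ s, max x (m i)| + ∑ i ∈ s, |m i| := by
  rcases le_or_gt 0 x with hx | hx
  · have hsum : ∑ i ∈ s, -|m i| ≤ ∑ i ∈ s, max x (m i) :=
      Finset.sum_le_sum fun i _ => (neg_abs_le _).trans (le_max_right _ _)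
    rw [Finset.sum_neg_distrib] at hsum
    linarith [abs_of_nonneg hx, le_abs_self (x + ∑ i ∈ s, max x (m i))]
  · have hsum : ∑ i ∈ s, max x (m i) ≤ ∑ i ∈ s, |m i| :=
      Finset.sum_le_sum fun i _ => max_le (hx.le.trans (abs_nonneg _)) (le_abs_self _)
    linarith [abs_of_neg hx, neg_abs_le (x + ∑ i ∈ s, max x (m i))]

section runMax

variable {Ω : Type*} (L : ℕ → Ω → ℝ) (ω : Ω)

lemma runMax_self (t : ℕ) : runMax L t t ω = L t ω := by
  simp [runMax]

lemma runMax_succ {t u : ℕ} (h : t ≤ u + 1) :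
    runMax L t (u + 1) ω = max (L (u + 1) ω) (runMax L t u ω) := by
  have hIcc : Finset.Icc t (u + 1) = insert (u + 1) (Finset.Icc t u) := by
    ext v; simp only [Finset.mem_Icc, Finset.mem_insert]; omega
  rw [runMax, hIcc, Finset.fold_insert (by simp)]
  rfl

lemma runMax_le_iff {t u : ℕ} (htu : t ≤ u) {c : ℝ} :
    runMax L t u ω ≤ c ↔ ∀ v ∈ Finset.Icc t u, L v ω ≤ c := by
  rw [runMax, Finset.fold_max_le]
  exact ⟨fun h => h.2, fun h => ⟨h t (Finset.mem_Icc.2 ⟨le_rfl, htu⟩), h⟩⟩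

lemma le_runMax {t v u : ℕ} (htv : t ≤ v) (hvu : v ≤ u) : L v ω ≤ runMax L t u ω :=
  (Finset.le_fold_max _).2 (Or.inr ⟨v, Finset.mem_Icc.2 ⟨htv, hvu⟩, le_rfl⟩)

lemma runMax_mono {s t u v : ℕ} (hst : s ≤ t) (htu : t ≤ u) (huv : u ≤ v) :
    runMax L t u ω ≤ runMax L s v ω :=
  (runMax_le_iff L ω htu).2 fun _ hw =>
    le_runMax L ω (hst.trans (Finset.mem_Icc.1 hw).1) ((Finset.mem_Icc.1 hw).2.trans huv)

lemma runMax_eq_max_runMax_succ {t u : ℕ} (htu : t < u) :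
    runMax L t u ω = max (L t ω) (runMax L (t + 1) u ω) := by
  refine le_antisymm ((runMax_le_iff L ω htu.le).2 fun v hv => ?_)
    (max_le (le_runMax L ω le_rfl htu.le) (runMax_mono L ω (Nat.le_succ t) htu le_rfl))
  rcases (Finset.mem_Icc.1 hv).1.eq_or_lt with rfl | htv
  · exact le_max_left _ _
  · exact le_max_of_le_right (le_runMax L ω htv (Finset.mem_Icc.1 hv).2)

lemma runMax_zero_eq_of_increase {t u : ℕ} (htu : t ≤ u)
    (h : t = 0 ∨ runMax L 0 (t - 1) ω < runMax L 0 t ω) :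
    runMax L 0 u ω = runMax L t u ω := by
  cases t with
  | zero => rfl
  | succ s =>
    have hnew : runMax L 0 s ω < L (s + 1) ω := by
      simpa [runMax_succ L ω (Nat.zero_le _)] using h
    refine le_antisymm ((runMax_le_iff L ω (Nat.zero_le u)).2 fun v hv => ?_)
      (runMax_mono L ω (Nat.zero_le _) htu le_rfl)
    rcases le_or_gt v s with hvs | hsv
    · exact (le_runMax L ω (Nat.zero_le v) hvs).trans hnew.le |>.trans (le_runMax L ω le_rfl htu)
    · exact le_runMax L ω hsv (Finset.mem_Icc.1 hv).2

lemma sum_runMax_le_sum_runMax_zero (t N : ℕ) :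
    ∑ u ∈ Finset.Ico t N, runMax L t u ω ≤ ∑ u ∈ Finset.Ico t N, runMax L 0 u ω :=
  Finset.sum_le_sum fun _ hu => runMax_mono L ω t.zero_le (Finset.mem_Ico.1 hu).1 le_rfl

lemma sum_runMax_zero_eq_of_increase {t : ℕ} (N : ℕ)
    (h : t = 0 ∨ runMax L 0 (t - 1) ω < runMax L 0 t ω) :
    ∑ u ∈ Finset.Ico t N, runMax L 0 u ω = ∑ u ∈ Finset.Ico t N, runMax L t u ω :=
  Finset.sum_congr rfl fun _ hu => runMax_zero_eq_of_increase L ω (Finset.mem_Ico.1 hu).1 h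

lemma abs_le_abs_sum_runMax_add {t N : ℕ} (htN : t < N) :
    |L t ω| ≤ |∑ u ∈ Finset.Ico t N, runMax L t u ω|
      + ∑ u ∈ Finset.Ico (t + 1) N, |runMax L (t + 1) u ω| := by
  have hsum : ∑ u ∈ Finset.Ico t N, runMax L t u ω
      = L t ω + ∑ u ∈ Finset.Ico (t + 1) N, max (L t ω) (runMax L (t + 1) u ω) := by
    rw [Finset.sum_eq_sum_Ico_succ_bot htN, runMax_self]
    exact congrArg _ (Finset.sum_congr rfl fun u hu =>
      runMax_eq_max_runMax_succ L ω (Finset.mem_Ico.1 hu).1)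
  rw [hsum]
  exact abs_le_abs_add_sum_max _ _ _

lemma measurable_runMax {m : MeasurableSpace Ω} {t u : ℕ} (htu : t ≤ u)
    (hL : ∀ v, t ≤ v → v ≤ u → Measurable (L v)) : Measurable (runMax L t u) := by
  induction u, htu using Nat.le_induction with
  | base => simpa only [funext (runMax_self L · t)] using hL t le_rfl le_rfl
  | succ u htu ih =>
    have hsucc : runMax L t (u + 1) = fun ω => max (L (u + 1) ω) (runMax L t u ω) :=
      funext (runMax_succ L · (htu.trans u.le_succ))
    rw [hsucc]
    exact (hL (u + 1) (htu.trans u.le_succ) le_rfl).max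
      (ih fun v htv hvu => hL v htv (hvu.trans u.le_succ))

lemma stronglyMeasurable_runMax {m : MeasurableSpace Ω} (F : Filtration ℕ m) {t u : ℕ}
    (htu : t ≤ u) (hL : ∀ v ≤ u, StronglyMeasurable[F v] (L v)) :
    StronglyMeasurable[F u] (runMax L t u) :=
  (measurable_runMax L htu fun v _ hvu =>
    ((hL v hvu).mono (F.mono hvu)).measurable).stronglyMeasurable

lemma measurableSet_runMax_increase {m : MeasurableSpace Ω} (F : Filtration ℕ m) {t : ℕ}
    (hL : ∀ v ≤ t, StronglyMeasurable[F v] (L v)) :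
    MeasurableSet[F t] {ω | t = 0 ∨ runMax L 0 (t - 1) ω < runMax L 0 t ω} :=
  (MeasurableSet.const _).union (measurableSet_lt
    (((stronglyMeasurable_runMax L F (t - 1).zero_le fun v hv => hL v (hv.trans (t.sub_le 1))).mono
      (F.mono (t.sub_le 1))).measurable)
    (stronglyMeasurable_runMax L F t.zero_le hL).measurable)

lemma stronglyMeasurable_sum_runMax_add {m : MeasurableSpace Ω} (F : Filtration ℕ m)
    {N s t : ℕ} {ξN : Ω → ℝ} (hL : ∀ v < N, StronglyMeasurable[F v] (L v))
    (hξN : StronglyMeasurable[F N] ξN) (hst : s ≤ t) :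
    StronglyMeasurable[F N] fun ω => (∑ u ∈ Finset.Ico t N, runMax L s u ω) + ξN ω := by
  refine (Finset.stronglyMeasurable_fun_sum _ fun u hu => ?_).add hξN
  obtain ⟨htu, huN⟩ := Finset.mem_Ico.1 hu
  exact (stronglyMeasurable_runMax L F (hst.trans htu) fun v hv =>
    hL v (hv.trans_lt huN)).mono (F.mono huN.le)

lemma memLp_runMax {m : MeasurableSpace Ω} {μ : Measure Ω} {p : ℝ≥0∞} {N : ℕ}
    (hL : ∀ t < N, AEStronglyMeasurable (L t) μ)
    (hS : ∀ t < N, MemLp (fun ω => ∑ u ∈ Finset.Ico t N, runMax L t u ω) p μ)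
    {t u : ℕ} (htu : t ≤ u) (huN : u < N) : MemLp (runMax L t u) p μ := by
  induction (show t ≤ N by omega) using Nat.decreasingInduction generalizing u with
  | self => omega
  | of_succ t htN ih =>
    have hLt : MemLp (L t) p μ :=
      ((hS t htN).norm.add (memLp_finsetSum _ fun u hu =>
        (ih (Finset.mem_Ico.1 hu).1 (Finset.mem_Ico.1 hu).2).norm)).mono' (hL t htN)
        (ae_of_all _ fun ω => by simpa using abs_le_abs_sum_runMax_add L ω htN)
    rcases htu.eq_or_lt with rfl | htu
    · simpa only [funext (runMax_self L · t)] using hLt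
    · rw [show runMax L t u = L t ⊔ runMax L (t + 1) u from
        funext (runMax_eq_max_runMax_succ L · htu)]
      exact hLt.sup (ih htu huN)

lemma memLp_sum_runMax_add {m : MeasurableSpace Ω} {μ : Measure Ω} {p : ℝ≥0∞} {N s t : ℕ}
    {ξN : Ω → ℝ} (hL : ∀ t < N, AEStronglyMeasurable (L t) μ)
    (hS : ∀ t < N, MemLp (fun ω => ∑ u ∈ Finset.Ico t N, runMax L t u ω) p μ)
    (hξN : MemLp ξN p μ) (hst : s ≤ t) :
    MemLp (fun ω => (∑ u ∈ Finset.Ico t N, runMax L s u ω) + ξN ω) p μ :=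
  (memLp_finsetSum _ fun _ hu => memLp_runMax L hL hS (hst.trans (Finset.mem_Ico.1 hu).1)
    (Finset.mem_Ico.1 hu).2).add hξN

end runMax

lemma NLExp.E_ae_eq_of_eqOn {Ω : Type*} {m0 : MeasurableSpace Ω} {μ : Measure Ω}
    {F : Filtration ℕ m0} {N : ℕ} (EE : NLExp μ F N) {t : ℕ} (ht : t ≤ N)
    {ξ η : Ω → ℝ}
    (hξ : StronglyMeasurable[F N] ξ) (hξ2 : MemLp ξ 2 μ)
    (hη : StronglyMeasurable[F N] η) (hη2 : MemLp η 2 μ)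
    {A : Set Ω} (hA : MeasurableSet[F t] A) (hEq : Set.EqOn ξ η A) :
    ∀ᵐ ω ∂μ, ω ∈ A → EE.E t ξ ω = EE.E t η ω := by
  have h := EE.zeroOne t ht ξ η hξ hξ2 hη hη2 A hA
  rw [Set.indicator_congr hEq, Set.indicator_self_add_compl] at h
  filter_upwards [h] with ω hω hωA
  simp [hω, hωA]

theorem skorokhod_obstacle_existence_general
{Ω : Type*}
    [m0 : MeasurableSpace Ω]
    (μ : Measure Ω)
    (F : Filtration ℕ m0) (N : ℕ)
    (EE : NLExp μ F N)
(X : ℕ → Ω → ℝ)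
    (hX_adapted : ∀ t, t ≤ N → StronglyMeasurable[F t] (X t))
    (hX_sqInt : ∀ t, t ≤ N → MemLp (X t) 2 μ)
(L : ℕ → Ω → ℝ)
    (hL_adapted : ∀ t, t < N → StronglyMeasurable[F t] (L t))
    (hL_sqInt : ∀ t, t < N →
      MemLp (fun ω => ∑ u ∈ Finset.Ico t N, runMax L t u ω) 2 μ)
    (hL_rep : ∀ t, t < N →
      X t =ᵐ[μ] EE.E t fun ω => (∑ u ∈ Finset.Ico t N, runMax L t u ω) + X N ω)
(Y : ℕ → Ω → ℝ)
    (hY_def : ∀ t, t < N →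
      Y t = EE.E t fun ω => (∑ u ∈ Finset.Ico t N, runMax L 0 u ω) + X N ω)
    (hY_N : Y N = X N) :
    (∀ t, t < N → StronglyMeasurable[F t] fun ω => runMax L 0 t ω) ∧
    (∀ t, t < N → MemLp (fun ω => runMax L 0 t ω) 2 μ) ∧
    (∀ ω, ∀ s t, s ≤ t → t < N → runMax L 0 s ω ≤ runMax L 0 t ω) ∧
    (∀ t, t ≤ N → StronglyMeasurable[F t] (Y t)) ∧
    (∀ t, t ≤ N → MemLp (Y t) 2 μ) ∧
    (∀ t, t ≤ N → X t ≤ᵐ[μ] Y t) ∧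
    (∀ᵐ ω ∂μ, ∀ t, t < N →
      (t = 0 ∨ runMax L 0 (t - 1) ω < runMax L 0 t ω) → Y t ω = X t ω) ∧
    Y N = X N := by
  have hLae : ∀ t < N, AEStronglyMeasurable (L t) μ := fun t ht =>
    ((hL_adapted t ht).mono (F.le t)).aestronglyMeasurable
  have hξm : ∀ s t, s ≤ t → StronglyMeasurable[F N]
      (fun ω => (∑ u ∈ Finset.Ico t N, runMax L s u ω) + X N ω) := fun _ _ =>
    stronglyMeasurable_sum_runMax_add L F hL_adapted (hX_adapted N le_rfl)
  have hξ2 : ∀ s t, s ≤ t →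
      MemLp (fun ω => (∑ u ∈ Finset.Ico t N, runMax L s u ω) + X N ω) 2 μ := fun _ _ =>
    memLp_sum_runMax_add L hLae hL_sqInt (hX_sqInt N le_rfl)
  have hY : ∀ t ≤ N, StronglyMeasurable[F t] (Y t) ∧ MemLp (Y t) 2 μ := fun t ht => by
    rcases ht.lt_or_eq with ht | rfl
    · rw [hY_def t ht]
      exact ⟨EE.adapted t ht.le _ (hξm 0 t t.zero_le) (hξ2 0 t t.zero_le),
        EE.sqInt t ht.le _ (hξm 0 t t.zero_le) (hξ2 0 t t.zero_le)⟩
    · exact hY_N ▸ ⟨hX_adapted t le_rfl, hX_sqInt t le_rfl⟩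
  refine ⟨fun t ht =>
      stronglyMeasurable_runMax L F t.zero_le fun v hv => hL_adapted v (hv.trans_lt ht),
    fun t ht => memLp_runMax L hLae hL_sqInt t.zero_le ht,
    fun ω s t hst _ => runMax_mono L ω le_rfl s.zero_le hst, fun t ht => (hY t ht).1,
    fun t ht => (hY t ht).2, fun t ht => ?_, ae_all_iff.2 fun t => ?_, hY_N⟩
  · rcases ht.lt_or_eq with ht | rfl
    · rw [hY_def t ht]
      exact (hL_rep t ht).trans_le (EE.mono t ht.le _ _ (hξm t t le_rfl) (hξ2 t t le_rfl)
        (hξm 0 t t.zero_le) (hξ2 0 t t.zero_le)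
        (ae_of_all _ fun ω => add_le_add_left (sum_runMax_le_sum_runMax_zero L ω t N) _))
    · rw [hY_N]
  · rcases lt_or_ge t N with ht | ht
    · filter_upwards [EE.E_ae_eq_of_eqOn ht.le (hξm 0 t t.zero_le) (hξ2 0 t t.zero_le)
          (hξm t t le_rfl) (hξ2 t t le_rfl)
          (measurableSet_runMax_increase L F fun v hv => hL_adapted v (hv.trans_lt ht))
          fun ω hω => congrArg (· + X N ω) (sum_runMax_zero_eq_of_increase L ω N hω),
        hL_rep t ht] with ω hE hX _ hinc
      rw [hY_def t ht, hX, hE hinc]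
    · exact ae_of_all _ fun ω h => absurd h ht.not_gt

/-- **Skorokhod-type obstacle problem, existence via the running maximum.** With
`η_t := max_{0≤v≤t} L_v` and `Y_t := E t [∑_{u=t}^{N-1} η_u + X_N]` (`Y_N := X_N`),
the process `η` is adapted, square-integrable and nondecreasing, `Y` is adapted and
square-integrable, `Y` dominates `X`, and a.s. `Y_t = X_t` at every point of
increase of `η` (with the convention `η_{-1} = -∞`, so `t = 0` is always a point of
increase) and at `t = N`. -/
theorem skorokhod_obstacle_existence
{Ω : Type*} [TopologicalSpace Ω] [PolishSpace Ω]
    [m0 : MeasurableSpace Ω] [BorelSpace Ω]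
    (μ : Measure Ω) [IsProbabilityMeasure μ]
    (F : Filtration ℕ m0) (N : ℕ) (hN : 1 ≤ N)
    (EE : NLExp μ F N)
(X : ℕ → Ω → ℝ)
    (hX_adapted : ∀ t, t ≤ N → StronglyMeasurable[F t] (X t))
    (hX_sqInt : ∀ t, t ≤ N → MemLp (X t) 2 μ)
(L : ℕ → Ω → ℝ)
    (hL_adapted : ∀ t, t < N → StronglyMeasurable[F t] (L t))
    (hL_sqInt : ∀ t, t < N →
      MemLp (fun ω => ∑ u ∈ Finset.Ico t N, runMax L t u ω) 2 μ)
    (hL_rep : ∀ t, t < N →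
      X t =ᵐ[μ] EE.E t fun ω => (∑ u ∈ Finset.Ico t N, runMax L t u ω) + X N ω)
(Y : ℕ → Ω → ℝ)
    (hY_def : ∀ t, t < N →
      Y t = EE.E t fun ω => (∑ u ∈ Finset.Ico t N, runMax L 0 u ω) + X N ω)
    (hY_N : Y N = X N) :
    (∀ t, t < N → StronglyMeasurable[F t] fun ω => runMax L 0 t ω) ∧
    (∀ t, t < N → MemLp (fun ω => runMax L 0 t ω) 2 μ) ∧
    (∀ ω, ∀ s t, s ≤ t → t < N → runMax L 0 s ω ≤ runMax L 0 t ω) ∧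
    (∀ t, t ≤ N → StronglyMeasurable[F t] (Y t)) ∧
    (∀ t, t ≤ N → MemLp (Y t) 2 μ) ∧
    (∀ t, t ≤ N → X t ≤ᵐ[μ] Y t) ∧
    (∀ᵐ ω ∂μ, ∀ t, t < N →
      (t = 0 ∨ runMax L 0 (t - 1) ω < runMax L 0 t ω) → Y t ω = X t ω) ∧
    Y N = X N :=
  skorokhod_obstacle_existence_general (m0 := m0) μ F N EE X hX_adapted hX_sqInt L hL_adapted
    hL_sqInt hL_rep Y hY_def hY_N
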